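/- arXiv:math/0609539 — 3 statements merged into one kernel-verified Lean document; each statement's English description precedes it below -/
import Mathlib

section
/- Let Γ ⊆ ℝ be a set satisfying the dcc, let N be a natural number, and let S be a set of types such that: (a) S satisfies the acc with respect to the type order; (b) every entry of every type in S belongs to Γ; and (c) for every type β in S there is a type β' in S of length at most N whose multiset of nonzero entries equals the multiset of nonzero entries of β. Then the set of real numbers occurring as an entry of some type in S is finite. (Converse part of Lemma 2.18 of the paper.) -/
/-- The type order on types (finite sequences of reals):
`x ≤ y` iff `y` is shorter than `x`, or they have the same length and
`x` is pointwise `≤ y`. -/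
def TypeLE (x y : List ℝ) : Prop :=
  y.length < x.length ∨ List.Forall₂ (· ≤ ·) x y

/-- Strict version of the type order. -/
def TypeLT (x y : List ℝ) : Prop :=
  TypeLE x y ∧ x ≠ y

/-- A set of types satisfies the acc if there is no infinite strictly
increasing sequence of its elements. -/
def TypesACC (S : Set (List ℝ)) : Prop :=
  ¬ ∃ f : ℕ → List ℝ, (∀ n, f n ∈ S) ∧ ∀ n, TypeLT (f n) (f (n + 1))

/-- A set of reals satisfies the dcc if there is no infinite strictly
decreasing sequence of its elements. -/
def SetDCC (Γ : Set ℝ) : Prop :=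
  ¬ ∃ f : ℕ → ℝ, (∀ n, f n ∈ Γ) ∧ ∀ n, f (n + 1) < f n

/-- A set of reals satisfies the acc if there is no infinite strictly
increasing sequence of its elements. -/
def SetACC (Γ : Set ℝ) : Prop :=
  ¬ ∃ f : ℕ → ℝ, (∀ n, f n ∈ Γ) ∧ ∀ n, f n < f (n + 1)

/-!
Since `Γ` satisfies the dcc it is partially well-ordered, so by Higman's lemma the types of a
fixed length with entries in `Γ` are partially well-ordered pointwise; as there are only finitely
many lengths up to `N`, the types of length at most `N` in `S` are partially well-ordered by the
type order. An infinite partially well-ordered set contains an infinite strictly increasing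
sequence, so by the acc only finitely many types of `S` have length at most `N`. Every nonzero
entry of a type in `S` occurs in one of these abridged versions.
-/

namespace List

theorem Forall₂.trans {α : Type*} {R : α → α → Prop} [IsTrans α R] :
    ∀ {l₁ l₂ l₃ : List α}, Forall₂ R l₁ l₂ → Forall₂ R l₂ l₃ → Forall₂ R l₁ l₃
  | [], [], [], .nil, .nil => .nil
  | _ :: _, _ :: _, _ :: _, .cons h₁₂ t₁₂, .cons h₂₃ t₂₃ =>
    .cons (_root_.trans h₁₂ h₂₃) (t₁₂.trans t₂₃)

theorem SublistForall₂.forall₂_of_length_eq {α β : Type*} {R : α → β → Prop} {l₁ : List α}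
    {l₂ : List β} (h : SublistForall₂ R l₁ l₂) (hlen : l₁.length = l₂.length) :
    Forall₂ R l₁ l₂ := by
  obtain ⟨l, hR, hsub⟩ := sublistForall₂_iff.mp h
  rwa [hsub.eq_of_length (hR.length_eq ▸ hlen)] at hR

end List

namespace Set.PartiallyWellOrderedOn

variable {α : Type*} {r : α → α → Prop} {s : Set α}

theorem mono_rel {r' : α → α → Prop} (hs : s.PartiallyWellOrderedOn r)
    (h : ∀ a b, r a b → r' a b) : s.PartiallyWellOrderedOn r' := by
  rw [partiallyWellOrderedOn_iff_exists_lt] at hs ⊢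
  intro f hf
  obtain ⟨m, n, hmn, hr⟩ := hs f hf
  exact ⟨m, n, hmn, h _ _ hr⟩

theorem forall₂_setOf_length_eq [IsPreorder α r] (hs : s.PartiallyWellOrderedOn r) (k : ℕ) :
    {l : List α | l.length = k ∧ ∀ x ∈ l, x ∈ s}.PartiallyWellOrderedOn (List.Forall₂ r) := by
  rw [partiallyWellOrderedOn_iff_exists_lt]
  intro f hf
  obtain ⟨m, n, hmn, hsub⟩ :=
    (partiallyWellOrderedOn_sublistForall₂ r hs).exists_lt fun n => (hf n).2
  exact ⟨m, n, hmn, hsub.forall₂_of_length_eq ((hf m).1.trans (hf n).1.symm)⟩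

theorem finite_of_not_exists_strict_chain [IsPreorder α r] (hs : s.PartiallyWellOrderedOn r)
    (h : ¬ ∃ f : ℕ → α, (∀ n, f n ∈ s) ∧ ∀ n, r (f n) (f (n + 1)) ∧ f n ≠ f (n + 1)) :
    s.Finite := by
  by_contra hinf
  set e := Set.Infinite.natEmbedding s hinf
  obtain ⟨g, hg⟩ := hs.exists_monotone_subseq fun n => (e n).2
  refine h ⟨fun n => e (g n), fun n => (e (g n)).2, fun n => ⟨hg n (n + 1) n.le_succ, ?_⟩⟩
  exact fun heq => n.succ_ne_self
    (g.injective (e.injective (Subtype.ext heq))).symm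

end Set.PartiallyWellOrderedOn

theorem SetDCC.isPWO {Γ : Set ℝ} (h : SetDCC Γ) : Γ.IsPWO := by
  refine Set.IsWF.isPWO (Set.isWF_iff_no_descending_seq.mpr fun f hf hfΓ => h ?_)
  exact ⟨f, hfΓ, fun n => hf n.lt_succ_self⟩

theorem TypeLE.trans {x y z : List ℝ} (hxy : TypeLE x y) (hyz : TypeLE y z) : TypeLE x z := by
  rcases hxy with hxy | hxy <;> rcases hyz with hyz | hyz
  · exact Or.inl (hyz.trans hxy)
  · exact Or.inl (hyz.length_eq ▸ hxy)
  · exact Or.inl (hxy.length_eq ▸ hyz)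
  · exact Or.inr (hxy.trans hyz)

instance : IsPreorder (List ℝ) TypeLE where
  refl l := Or.inr (List.forall₂_refl l)
  trans _ _ _ := TypeLE.trans

theorem partiallyWellOrderedOn_typeLE_of_length_le {Γ : Set ℝ} (hΓ : Γ.IsPWO) (N : ℕ) :
    {l : List ℝ | l.length ≤ N ∧ ∀ x ∈ l, x ∈ Γ}.PartiallyWellOrderedOn TypeLE := by
  have hsup : {l : List ℝ | l.length ≤ N ∧ ∀ x ∈ l, x ∈ Γ} =
      (Finset.range (N + 1)).sup fun k => {l | l.length = k ∧ ∀ x ∈ l, x ∈ Γ} := by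
    ext l
    simp [Finset.sup_set_eq_biUnion]
  rw [hsup, Finset.partiallyWellOrderedOn_sup]
  exact fun k _ => (hΓ.forall₂_setOf_length_eq k).mono_rel fun _ _ => Or.inr

/-- If `Γ` satisfies the dcc, `S` satisfies the acc, every entry of
every type in `S` lies in `Γ`, and every type in `S` has an abridged version in `S`
of length at most `N` (same multiset of nonzero entries), then the set of reals
occurring as an entry of some type in `S` is finite. -/
theorem finite_entries_of_types_acc (Γ : Set ℝ) (hΓ : SetDCC Γ) (N : ℕ)
    (S : Set (List ℝ)) (hacc : TypesACC S)
    (hmem : ∀ β ∈ S, ∀ b ∈ β, b ∈ Γ)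
    (habr : ∀ β ∈ S, ∃ β' ∈ S, β'.length ≤ N ∧
      Multiset.filter (· ≠ 0) (↑β' : Multiset ℝ) =
        Multiset.filter (· ≠ 0) (↑β : Multiset ℝ)) :
    {b : ℝ | ∃ β ∈ S, b ∈ β}.Finite := by
  set short := {β ∈ S | β.length ≤ N}
  have hshort : short.Finite :=
    ((partiallyWellOrderedOn_typeLE_of_length_le hΓ.isPWO N).mono
      fun β hβ => ⟨hβ.2, hmem β hβ.1⟩).finite_of_not_exists_strict_chain
      fun ⟨f, hfS, hf⟩ => hacc ⟨f, fun n => (hfS n).1, hf⟩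
  refine ((hshort.biUnion fun β _ => β.finite_toSet).insert 0).subset ?_
  rintro b ⟨β, hβ, hb⟩
  rcases eq_or_ne b 0 with rfl | hb0
  · exact Set.mem_insert 0 _
  obtain ⟨β', hβ', hlen, hfilter⟩ := habr β hβ
  have hb' : b ∈ Multiset.filter (· ≠ 0) (↑β' : Multiset ℝ) := by
    rw [hfilter]
    exact Multiset.mem_filter.mpr ⟨Multiset.mem_coe.mpr hb, hb0⟩
  exact Set.mem_insert_of_mem 0
    (Set.mem_biUnion ⟨hβ', hlen⟩ (Multiset.mem_coe.mp (Multiset.mem_filter.mp hb').1))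
end

section
/- Let Γ ⊆ [0,1] be a set satisfying the dcc. Then the set of real numbers b' with b' < 1 that can be written as b' = (m−1)/m + (1/m)·(c_1 b_1 + ⋯ + c_k b_k) for some positive integer m, some k ≥ 0, some nonnegative integers c_1, …, c_k, and some elements b_1, …, b_k ∈ Γ, satisfies the dcc. (First part of Lemma 2.16 of the paper, on multiplicities arising from adjunction.) -/
/-!
The additive monoid generated by `Γ` is well-founded, since `Γ` is well-founded and
nonnegative (Higman's lemma). Below a fixed `x < 1` the multiplicities `(m - 1)/m + s/m` with
`s ≥ 0` only involve `m ≤ 1/(1 - x)`, and for each `m` they form the image of that monoid under a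
monotone affine map; a finite union of such images is well-founded.
-/

theorem setDCC_iff_isWF {Γ : Set ℝ} : SetDCC Γ ↔ Γ.IsWF := by
  rw [Set.isWF_iff_no_descending_seq, SetDCC]
  refine ⟨fun h f hf hmem => h ⟨f, hmem, fun n => hf n.lt_succ_self⟩,
    fun h ⟨f, hmem, hf⟩ => h f (strictAnti_nat_of_succ_lt hf) hmem⟩

theorem Set.isWF_of_forall_isWF_inter_Iic {α : Type*} [Preorder α] {s : Set α}
    (h : ∀ x ∈ s, (s ∩ Set.Iic x).IsWF) : s.IsWF := by
  rw [Set.isWF_iff_no_descending_seq]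
  intro f hf hmem
  exact (Set.isWF_iff_no_descending_seq.1 (h (f 0) (hmem 0))) f hf
    fun n => ⟨hmem n, hf.antitone n.zero_le⟩

noncomputable def adjunctionMap (m : ℕ) (s : ℝ) : ℝ :=
  ((m : ℝ) - 1) / m + (1 / m) * s

theorem adjunctionMap_monotone (m : ℕ) : Monotone (adjunctionMap m) :=
  fun _ _ h => add_le_add_right (mul_le_mul_of_nonneg_left h (by positivity)) _

theorem natCast_le_of_adjunctionMap_le {m : ℕ} {s x : ℝ} (hm : 0 < m) (hs : 0 ≤ s)
    (hx : adjunctionMap m s ≤ x) (hx1 : x < 1) : (m : ℝ) ≤ 1 / (1 - x) := by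
  have hm' : (0 : ℝ) < m := Nat.cast_pos.2 hm
  have h : 1 - 1 / (m : ℝ) ≤ x := calc
    1 - 1 / (m : ℝ) = ((m : ℝ) - 1) / m := by field_simp
    _ ≤ adjunctionMap m s := le_add_of_nonneg_right (by positivity)
    _ ≤ x := hx
  rw [le_div_iff₀ (sub_pos.2 hx1), ← le_div_iff₀' hm']
  linarith

theorem sum_natCast_mul_mem_addSubmonoid_closure {Γ : Set ℝ} {k : ℕ} (c : Fin k → ℕ)
    {b : Fin k → ℝ} (hb : ∀ i, b i ∈ Γ) :
    ∑ i, (c i : ℝ) * b i ∈ AddSubmonoid.closure Γ :=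
  AddSubmonoid.sum_mem _ fun i _ => by
    simpa only [nsmul_eq_mul] using
      AddSubmonoid.nsmul_mem _ (AddSubmonoid.subset_closure (hb i)) (c i)

/-- If `Γ ⊆ [0,1]` satisfies the dcc, then the set of real numbers
`b' < 1` of the form `b' = (m-1)/m + (1/m) * Σ cᵢ bᵢ` with `m` a positive integer,
`cᵢ` nonnegative integers and `bᵢ ∈ Γ`, satisfies the dcc. -/
theorem adjunction_multiplicities_dcc (Γ : Set ℝ) (hsub : Γ ⊆ Set.Icc 0 1)
    (hΓ : SetDCC Γ) :
    SetDCC {b' : ℝ | b' < 1 ∧ ∃ (m : ℕ) (k : ℕ) (c : Fin k → ℕ) (b : Fin k → ℝ),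
      0 < m ∧ (∀ i, b i ∈ Γ) ∧
      b' = ((m : ℝ) - 1) / m + (1 / m) * ∑ i, (c i : ℝ) * b i} := by
  have hΓ0 : ∀ x ∈ Γ, 0 ≤ x := fun x hx => (hsub hx).1
  have hT : (AddSubmonoid.closure Γ : Set ℝ).IsPWO :=
    (setDCC_iff_isWF.1 hΓ).isPWO.addSubmonoid_closure hΓ0
  rw [setDCC_iff_isWF]
  refine Set.isWF_of_forall_isWF_inter_Iic fun x ⟨hx1, _⟩ => ?_
  set N := ⌈1 / (1 - x)⌉₊
  refine ((Finset.range (N + 1)).isWF_sup.2 fun m _ =>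
    (hT.image_of_monotone (adjunctionMap_monotone m)).isWF).mono ?_
  rintro y ⟨⟨-, m, k, c, b, hm, hb, rfl⟩, hyx⟩
  have hs : 0 ≤ ∑ i, (c i : ℝ) * b i := Finset.sum_nonneg fun i _ =>
    mul_nonneg (Nat.cast_nonneg _) (hΓ0 _ (hb i))
  have hmN : m < N + 1 := Nat.lt_succ_of_le <| Nat.cast_le.1 <|
    (natCast_le_of_adjunctionMap_le hm hs hyx hx1).trans (Nat.le_ceil _)
  rw [Finset.sup_set_eq_biUnion]
  exact Set.mem_biUnion (Finset.mem_range.2 hmN)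
    ⟨_, sum_natCast_mul_mem_addSubmonoid_closure c hb, rfl⟩
end

section
/- Let R ⊆ (0,∞) be a finite set. Then the set of types (b_1, …, b_n) with every entry b_i > 0 for which there exist positive integers m_1, …, m_n with m_1 b_1 + ⋯ + m_n b_n ∈ R satisfies the acc with respect to the type order. (The boundedness argument of Example 2.15(1) of the paper: on a bounded family of Fano varieties the intersection numbers m_i = (D_i·C) are positive integers and Σ b_i m_i = (−K·C) takes finitely many values.) -/
/-!
Along a strictly increasing sequence of types the length can drop only finitely often, so
eventually consecutive terms have the same length and are pointwise `≤` and distinct. From then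
on every entry is at least the smallest entry `ε > 0` of the first such term, so each positive
integer coefficient `m` of a combination with value in `R` satisfies `m ε ≤ max R`. Hence only
finitely many coefficient lists occur, and two terms `β < β'` share the same coefficients `ms` and
the same value in `R`. But `Σ mᵢ βᵢ < Σ mᵢ β'ᵢ` because all `mᵢ` are positive.
-/

theorem List.finite_length_eq_forall_mem {α : Type*} {s : Set α} (hs : s.Finite) (n : ℕ) :
    {l : List α | l.length = n ∧ ∀ x ∈ l, x ∈ s}.Finite := by
  have := hs.to_subtype
  refine ((List.finite_length_eq s n).image (List.map Subtype.val)).subset ?_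
  rintro l ⟨rfl, hl⟩
  lift l to List s using hl
  exact ⟨l, by simp, rfl⟩

theorem List.exists_gt_forall_le {α : Type*} [LinearOrder α] [NoMaxOrder α] {a : α} :
    ∀ {l : List α}, (∀ b ∈ l, a < b) → ∃ ε, a < ε ∧ ∀ b ∈ l, ε ≤ b
  | [], _ => (exists_gt a).imp fun _ hε => ⟨hε, by simp⟩
  | b :: l, h => by
    obtain ⟨ε, hε, hεl⟩ := exists_gt_forall_le fun c hc => h c (mem_cons_of_mem b hc)
    refine ⟨min b ε, lt_min (h b mem_cons_self) hε, ?_⟩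
    simp only [mem_cons, forall_eq_or_imp]
    exact ⟨min_le_left b ε, fun c hc => (min_le_right b ε).trans (hεl c hc)⟩

theorem List.Forall₂.forall_mem_le {α : Type*} [Preorder α] {a : α} {x y : List α}
    (h : Forall₂ (· ≤ ·) x y) (hx : ∀ b ∈ x, a ≤ b) : ∀ b ∈ y, a ≤ b := by
  induction h with
  | nil => simp
  | cons hbc _ ih =>
    simp only [mem_cons, forall_eq_or_imp] at hx ⊢
    exact ⟨hx.1.trans hbc, ih hx.2⟩

theorem TypeLE.length_le {x y : List ℝ} (h : TypeLE x y) : y.length ≤ x.length :=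
  h.elim le_of_lt fun h => h.length_eq.ge

theorem exists_forall_forall₂_of_typeLT {f : ℕ → List ℝ} (hf : ∀ n, TypeLT (f n) (f (n + 1))) :
    ∃ N, ∀ n, List.Forall₂ (· ≤ ·) (f (N + n)) (f (N + n + 1)) := by
  have hanti : Antitone fun n => (f n).length :=
    antitone_nat_of_succ_le fun n => (hf n).1.length_le
  set N := Function.argmin fun n => (f n).length
  refine ⟨N, fun n => (hf (N + n)).1.resolve_left ?_⟩
  have h₁ : (f (N + n)).length ≤ (f N).length := hanti (Nat.le_add_right N n)
  have h₂ : (f N).length ≤ (f (N + n + 1)).length :=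
    Function.argmin_le (fun n => (f n).length) (N + n + 1)
  omega

def weightedSum (β : List ℝ) (ms : List ℕ) : ℝ :=
  (List.zipWith (fun b m => (m : ℝ) * b) β ms).sum

@[simp]
theorem weightedSum_nil_left (ms : List ℕ) : weightedSum [] ms = 0 := by
  simp [weightedSum]

@[simp]
theorem weightedSum_nil_right (β : List ℝ) : weightedSum β [] = 0 := by
  simp [weightedSum]

@[simp]
theorem weightedSum_cons (b : ℝ) (β : List ℝ) (m : ℕ) (ms : List ℕ) :
    weightedSum (b :: β) (m :: ms) = m * b + weightedSum β ms := by
  simp [weightedSum]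

theorem weightedSum_mono {x y : List ℝ} (h : List.Forall₂ (· ≤ ·) x y) (ms : List ℕ) :
    weightedSum x ms ≤ weightedSum y ms := by
  induction h generalizing ms with
  | nil => simp
  | cons hbc _ ih =>
    cases ms with
    | nil => simp
    | cons m ms => simpa using add_le_add (by gcongr) (ih ms)

theorem weightedSum_lt_of_forall₂ {x y : List ℝ} {ms : List ℕ} (h : List.Forall₂ (· ≤ ·) x y)
    (hne : x ≠ y) (hlen : ms.length = x.length) (hms : ∀ m ∈ ms, 0 < m) :
    weightedSum x ms < weightedSum y ms := by
  induction h generalizing ms with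
  | nil => exact absurd rfl hne
  | @cons b c x y hbc hxy ih =>
    obtain _ | ⟨m, ms⟩ := ms
    · simp at hlen
    have hm : (0 : ℝ) < m := by exact_mod_cast hms m List.mem_cons_self
    simp only [weightedSum_cons]
    rcases hbc.lt_or_eq with hbc | rfl
    · exact add_lt_add_of_lt_of_le (by gcongr) (weightedSum_mono hxy ms)
    · exact add_lt_add_right
        (ih (fun h => hne (h ▸ rfl)) (by simpa using hlen) fun m hm => hms m (.tail _ hm)) _

theorem weightedSum_nonneg {β : List ℝ} (hβ : ∀ b ∈ β, 0 ≤ b) (ms : List ℕ) :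
    0 ≤ weightedSum β ms := by
  induction β generalizing ms with
  | nil => simp
  | cons b β ih =>
    obtain _ | ⟨m, ms⟩ := ms
    · simp
    simp only [List.mem_cons, forall_eq_or_imp] at hβ
    simpa using add_nonneg (mul_nonneg (Nat.cast_nonneg m) hβ.1) (ih hβ.2 ms)

theorem mul_le_weightedSum {β : List ℝ} {ms : List ℕ} {ε : ℝ} {m : ℕ} (hε : 0 ≤ ε)
    (hβ : ∀ b ∈ β, ε ≤ b) (hlen : ms.length = β.length) (hm : m ∈ ms) :
    m * ε ≤ weightedSum β ms := by
  induction β generalizing ms with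
  | nil => simp_all
  | cons b β ih =>
    obtain _ | ⟨m', ms⟩ := ms
    · simp at hm
    simp only [List.mem_cons, forall_eq_or_imp, List.length_cons, add_left_inj] at hβ hlen hm
    have hb : 0 ≤ (m' : ℝ) * b := mul_nonneg (Nat.cast_nonneg _) (hε.trans hβ.1)
    have hrest := weightedSum_nonneg (fun c hc => hε.trans (hβ.2 c hc)) ms
    rw [weightedSum_cons]
    rcases hm with rfl | hm
    · nlinarith [hβ.1]
    · linarith [ih hβ.2 hlen hm]

def integerCombinationTypes (R : Set ℝ) : Set (List ℝ) :=
  {β | (∀ b ∈ β, 0 < b) ∧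
    ∃ ms : List ℕ, ms.length = β.length ∧ (∀ m ∈ ms, 0 < m) ∧ weightedSum β ms ∈ R}

theorem integerCombinationTypes.exists_eq_succ_of_forall₂ {R : Set ℝ} (hR : R.Finite)
    {g : ℕ → List ℝ} (hg : ∀ n, g n ∈ integerCombinationTypes R)
    (hle : ∀ n, List.Forall₂ (· ≤ ·) (g n) (g (n + 1))) : ∃ n, g n = g (n + 1) := by
  obtain ⟨ε, hε, hεg₀⟩ := List.exists_gt_forall_le (hg 0).1
  have hεg : ∀ n, ∀ b ∈ g n, ε ≤ b := Nat.rec hεg₀ fun n ih => (hle n).forall_mem_le ih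
  have hlen : ∀ n, (g n).length = (g 0).length :=
    Nat.rec rfl fun n ih => (hle n).length_eq.symm.trans ih
  obtain ⟨c, hc⟩ := hR.bddAbove
  choose ms hmslen hmspos hmsR using fun n => (hg n).2
  set T := {l : List ℕ | l.length = (g 0).length ∧ ∀ m ∈ l, m ∈ Set.Iic ⌊c / ε⌋₊}
  have hmsT : ∀ n, ms n ∈ T := fun n => ⟨(hmslen n).trans (hlen n), fun m hm =>
    Nat.le_floor <| (le_div_iff₀ hε).2 <|
      (mul_le_weightedSum hε.le (hεg n) (hmslen n) hm).trans (hc (hmsR n))⟩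
  obtain ⟨a, b, hab, heq⟩ := Set.Finite.exists_lt_map_eq_of_forall_mem (t := T ×ˢ R)
    (f := fun n => (ms n, weightedSum (g n) (ms n))) (fun n => ⟨hmsT n, hmsR n⟩)
    ((List.finite_length_eq_forall_mem (Set.finite_Iic _) _).prod hR)
  simp only [Prod.mk.injEq] at heq
  by_contra! hne
  have hmono : StrictMono fun n => weightedSum (g n) (ms a) :=
    strictMono_nat_of_lt_succ fun n => weightedSum_lt_of_forall₂ (hle n) (hne n)
      ((hmslen a).trans ((hlen a).trans (hlen n).symm)) (hmspos a)
  exact (hmono hab).ne (heq.2.trans (by rw [heq.1]))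

theorem types_acc_of_integer_combination_general (R : Set ℝ) (hR : R.Finite) :
    TypesACC {β : List ℝ | (∀ b ∈ β, 0 < b) ∧
      ∃ ms : List ℕ, ms.length = β.length ∧ (∀ m ∈ ms, 0 < m) ∧
        (List.zipWith (fun b m => (m : ℝ) * b) β ms).sum ∈ R} := by
  rintro ⟨f, hfS, hf⟩
  obtain ⟨N, hN⟩ := exists_forall_forall₂_of_typeLT hf
  obtain ⟨n, hn⟩ := integerCombinationTypes.exists_eq_succ_of_forall₂ hR
    (g := fun n => f (N + n)) (fun n => hfS (N + n)) hN
  exact (hf (N + n)).2 hn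

/-- If `R ⊆ (0,∞)` is finite, then the set of types with positive
entries `bᵢ` for which there exist positive integers `mᵢ` with `Σ mᵢ bᵢ ∈ R`
satisfies the acc with respect to the type order. -/
theorem types_acc_of_integer_combination (R : Set ℝ) (hR : R.Finite)
    (hsub : ∀ r ∈ R, 0 < r) :
    TypesACC {β : List ℝ | (∀ b ∈ β, 0 < b) ∧
      ∃ ms : List ℕ, ms.length = β.length ∧ (∀ m ∈ ms, 0 < m) ∧
        (List.zipWith (fun b m => (m : ℝ) * b) β ms).sum ∈ R} :=
  types_acc_of_integer_combination_general R hR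
end
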